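/- arXiv:2501.18259 — 10 statements merged into one kernel-verified Lean document; each statement's English description precedes it below -/
import Mathlib

section
/- Let p_1 < p_2 < ... < p_r be primes with r ≥ 2 and suppose p_1 ≥ r. Then 2·φ(p_1·p_2⋯p_{r-1}) ≥ p_1·p_2⋯p_{r-1}, with equality if and only if r = 2 and p_1 = 2. -/
open Finset
open scoped Nat

/-!
Since `φ P = ∏ (p i - 1)`, the inequality says `P / φ P = ∏ p i / (p i - 1) ≤ 2`.
As `x ↦ x / (x - 1)` is decreasing on `(1, ∞)` and `p i ≥ p 0 + i ≥ r + i`, this product is at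
most the telescoping product `∏_{i < r - 1} (r + i) / (r + i - 1) = (2r - 2) / (r - 1) = 2`,
strictly so as soon as one `p i > r + i`. For `r ≥ 3` equality would thus force the
consecutive integers `p 0 = r ≥ 3` and `p 1 = r + 1` to be both prime.
-/

theorem Nat.Prime.add_one_lt_of_lt {p q : ℕ} (hp : p.Prime) (hq : q.Prime) (hp2 : p ≠ 2)
    (hpq : p < q) : p + 1 < q := by
  refine (Nat.succ_le_of_lt hpq).lt_of_ne fun h => ?_
  have hodd := hp.odd_of_ne_two hp2
  have := hq.even_iff.mp (h ▸ hodd.add_one)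
  have := hp.two_le
  omega

theorem StrictMonoOn.apply_zero_add_le {f : ℕ → ℕ} {n : ℕ} (hf : StrictMonoOn f (Set.Iio n))
    {i : ℕ} (hi : i < n) : f 0 + i ≤ f i := by
  induction i with
  | zero => rfl
  | succ i ih =>
    have := hf (Set.mem_Iio.2 (by omega)) (Set.mem_Iio.2 hi) (Nat.lt_succ_self i)
    have := ih (by omega)
    omega

theorem Nat.totient_prod_of_prime {ι : Type*} {s : Finset ι} {p : ι → ℕ}
    (hp : ∀ i ∈ s, (p i).Prime) (hinj : Set.InjOn p s) :
    φ (∏ i ∈ s, p i) = ∏ i ∈ s, (p i - 1) := by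
  classical
  induction s using Finset.induction_on with
  | empty => simp
  | insert j s hj ih =>
    rw [coe_insert, Set.injOn_insert (by exact_mod_cast hj)] at hinj
    have hcop : (p j).Coprime (∏ i ∈ s, p i) := Nat.Coprime.prod_right fun i hi =>
      (Nat.coprime_primes (hp j (mem_insert_self j s)) (hp i (mem_insert_of_mem hi))).2
        fun h => hinj.2 (h ▸ Set.mem_image_of_mem p hi)
    rw [prod_insert hj, prod_insert hj, Nat.totient_mul hcop,
      Nat.totient_prime (hp j (mem_insert_self j s)),
      ih (fun i hi => hp i (mem_insert_of_mem hi)) hinj.1]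

theorem Nat.cast_prod_div_totient_prod_of_prime {ι : Type*} {s : Finset ι} {p : ι → ℕ}
    (hp : ∀ i ∈ s, (p i).Prime) (hinj : Set.InjOn p s) :
    ((∏ i ∈ s, p i : ℕ) : ℚ) / φ (∏ i ∈ s, p i) = ∏ i ∈ s, (p i : ℚ) / (p i - 1) := by
  rw [Nat.totient_prod_of_prime hp hinj, prod_div_distrib]
  push_cast [Nat.cast_prod]
  congr 1
  refine prod_congr rfl fun i hi => ?_
  rw [Nat.cast_sub (hp i hi).one_le, Nat.cast_one]

section Ordered

variable {K : Type*} [Field K] [LinearOrder K] [IsStrictOrderedRing K]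

theorem strictAntiOn_div_sub_one : StrictAntiOn (fun x : K => x / (x - 1)) (Set.Ioi 1) := by
  intro x hx y hy hxy
  simp only [Set.mem_Ioi] at hx hy
  rw [div_lt_div_iff₀ (by linarith) (by linarith)]
  nlinarith

theorem prod_range_add_div_add_sub_one {a : K} (ha : 1 < a) (k : ℕ) :
    ∏ i ∈ range k, (a + i) / (a + i - 1) = (a + k - 1) / (a - 1) := by
  induction k with
  | zero => simp [div_self (sub_ne_zero.2 ha.ne')]
  | succ k ih =>
    have h1 : a - 1 ≠ 0 := by linarith
    have h2 : a + k - 1 ≠ 0 := by have : (0 : K) ≤ k := k.cast_nonneg; linarith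
    rw [prod_range_succ, ih]
    push_cast
    field_simp
    ring

theorem prod_range_div_sub_one_lt {a : K} (ha : 1 < a) {q : ℕ → K} {k : ℕ}
    (hq : ∀ i < k, a + i ≤ q i) (hlt : ∃ i < k, a + i < q i) :
    ∏ i ∈ range k, q i / (q i - 1) < (a + k - 1) / (a - 1) := by
  rw [← prod_range_add_div_add_sub_one ha]
  have hgt : ∀ i ∈ range k, 1 < a + i := fun i _ => by
    have : (0 : K) ≤ i := i.cast_nonneg; linarith
  obtain ⟨j, hj, hjlt⟩ := hlt
  refine prod_lt_prod (fun i hi => ?_) (fun i hi => ?_) ⟨j, mem_range.2 hj, ?_⟩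
  · have := (hgt i hi).trans_le (hq i (mem_range.1 hi))
    exact div_pos (by linarith) (by linarith)
  · exact strictAntiOn_div_sub_one.antitoneOn (hgt i hi)
      ((hgt i hi).trans_le (hq i (mem_range.1 hi))) (hq i (mem_range.1 hi))
  · have hj' := hgt j (mem_range.2 hj)
    exact strictAntiOn_div_sub_one hj' (hj'.trans hjlt) hjlt

theorem prod_range_div_sub_one_le {a : K} (ha : 1 < a) {q : ℕ → K} {k : ℕ}
    (hq : ∀ i < k, a + i ≤ q i) :
    ∏ i ∈ range k, q i / (q i - 1) ≤ (a + k - 1) / (a - 1) := by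
  by_cases hlt : ∃ i < k, a + i < q i
  · exact (prod_range_div_sub_one_lt ha hq hlt).le
  push Not at hlt
  rw [← prod_range_add_div_add_sub_one ha]
  refine (prod_congr rfl fun i hi => ?_).le
  rw [(hlt i (mem_range.1 hi)).antisymm (hq i (mem_range.1 hi))]

end Ordered

theorem stmt_0 (r : ℕ) (hr : 2 ≤ r) (p : ℕ → ℕ)
    (hp : ∀ i < r, (p i).Prime)
    (hmono : ∀ i j, i < j → j < r → p i < p j)
    (hge : r ≤ p 0) :
    2 * Nat.totient (∏ i ∈ Finset.range (r - 1), p i) ≥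
      ∏ i ∈ Finset.range (r - 1), p i ∧
    (2 * Nat.totient (∏ i ∈ Finset.range (r - 1), p i) =
      ∏ i ∈ Finset.range (r - 1), p i ↔ r = 2 ∧ p 0 = 2) := by
  have hmono' : StrictMonoOn p (Set.Iio r) := fun i hi j hj hij => hmono i j hij hj
  have hr1 : (1 : ℚ) < r := by exact_mod_cast hr
  have hbound : ∀ i < r - 1, (r : ℚ) + i ≤ p i := fun i hi => by
    exact_mod_cast (Nat.add_le_add_right hge i).trans (hmono'.apply_zero_add_le (by omega))
  have hratio := Nat.cast_prod_div_totient_prod_of_prime (s := range (r - 1))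
    (fun i hi => hp i ((mem_range.1 hi).trans_le (Nat.sub_le r 1))) (hmono'.injOn.mono (by simp))
  have hpos : (0 : ℚ) < φ (∏ i ∈ range (r - 1), p i) := by
    exact_mod_cast Nat.totient_pos.2 (prod_pos fun i hi => (hp i ((mem_range.1 hi).trans_le (Nat.sub_le r 1))).pos)
  have htwo : ((r : ℚ) + (r - 1 : ℕ) - 1) / (r - 1) = 2 := by
    have : (r : ℚ) - 1 ≠ 0 := by linarith
    rw [Nat.cast_sub (by omega)]
    field_simp
    ring
  refine ⟨?_, fun heq => ?_, ?_⟩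
  · have := prod_range_div_sub_one_le hr1 hbound
    rw [← hratio, htwo, div_le_iff₀ hpos] at this
    exact_mod_cast this
  · rcases hr.eq_or_lt with rfl | hr3
    · rw [prod_range_one, Nat.totient_prime (hp 0 (by omega))] at heq
      have := (hp 0 (by omega)).two_le
      omega
    have hp1 : r + 1 < p 1 :=
      (Nat.add_le_add_right hge 1).trans_lt <| (hp 0 (by omega)).add_one_lt_of_lt
        (hp 1 (by omega)) (by omega) (hmono 0 1 one_pos (by omega))
    have := prod_range_div_sub_one_lt hr1 hbound ⟨1, by omega, by exact_mod_cast hp1⟩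
    rw [← hratio, htwo, div_lt_iff₀ hpos] at this
    exact absurd heq (by exact_mod_cast this.ne')
  · rintro ⟨rfl, h2⟩
    simp [h2]
end

section
/- Let p_1 < p_2 < ... < p_r be primes and let I ⊆ {1,...,r} be nonempty with |I| = t. Then (t+1)·φ(∏_{i∈I} p_i) ≥ ∏_{i∈I} p_i, with equality if and only if either t = 1, I = {1} and p_1 = 2, or t = 2, I = {1,2}, p_1 = 2 and p_2 = 3. -/
/-! For distinct primes `q`, `φ (∏ q) = ∏ (q - 1)`, so the claim is `∏ q ≤ (t + 1) ∏ (q - 1)`.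
Listed increasingly, the `k`-th prime is at least `k + 1`, so `q / (q - 1) ≤ (k + 1) / k` and the
product telescopes to at most `t + 1`. Equality forces the primes to be exactly `2, 3, …, t + 1`,
which is possible only for `t ≤ 2`; since `p i ≥ i + 2`, the primes `2` and `3` can only be
`p 0` and `p 1`. -/

open Finset

namespace Nat

theorem totient_prod_of_prime_s1 {s : Finset ℕ} (hs : ∀ q ∈ s, q.Prime) :
    φ (∏ q ∈ s, q) = ∏ q ∈ s, (q - 1) := by
  have hpos : 0 < ∏ q ∈ s, q := prod_pos fun q hq => (hs q hq).pos
  have h := totient_mul_prod_primeFactors (∏ q ∈ s, q)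
  rw [primeFactors_prod hs, mul_comm] at h
  exact Nat.eq_of_mul_eq_mul_left hpos h

theorem card_add_two_le_of_forall_lt {s : Finset ℕ} {a : ℕ} (hs : ∀ n ∈ s, 2 ≤ n)
    (ha : ∀ n ∈ s, n < a) (h2 : 2 ≤ a) : #s + 2 ≤ a := by
  have := card_le_card fun n hn => mem_Ico.2 ⟨hs n hn, ha n hn⟩
  rw [card_Ico] at this
  omega

theorem add_two_mul_sub_one_eq {a k : ℕ} (h : k + 2 ≤ a) :
    (k + 2) * (a - 1) = (k + 1) * a + (a - (k + 2)) := by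
  obtain ⟨c, rfl⟩ := Nat.exists_eq_add_of_le h
  rw [show k + 2 + c - 1 = k + 1 + c by omega, show k + 2 + c - (k + 2) = c by omega]
  ring

theorem prod_le_card_add_one_mul_prod_sub_one (s : Finset ℕ) (hs : ∀ n ∈ s, 2 ≤ n) :
    ∏ n ∈ s, n ≤ (#s + 1) * ∏ n ∈ s, (n - 1) := by
  induction s using Finset.induction_on_max with
  | empty => simp
  | insert a s hlt ih =>
    have hs' : ∀ n ∈ s, 2 ≤ n := fun n hn => hs n (mem_insert_of_mem hn)
    have ha := card_add_two_le_of_forall_lt hs' hlt (hs a (mem_insert_self a s))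
    have has : a ∉ s := fun h => (hlt a h).false
    rw [prod_insert has, prod_insert has, card_insert_of_notMem has]
    calc a * ∏ n ∈ s, n ≤ a * ((#s + 1) * ∏ n ∈ s, (n - 1)) := Nat.mul_le_mul_left _ (ih hs')
      _ = ((#s + 1) * a) * ∏ n ∈ s, (n - 1) := by ring
      _ ≤ ((#s + 2) * (a - 1)) * ∏ n ∈ s, (n - 1) := by
        rw [add_two_mul_sub_one_eq ha]; exact Nat.mul_le_mul_right _ (Nat.le_add_right _ _)
      _ = (#s + 1 + 1) * ((a - 1) * ∏ n ∈ s, (n - 1)) := by ring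

theorem eq_Icc_of_card_add_one_mul_prod_sub_one_eq_prod (s : Finset ℕ) (hs : ∀ n ∈ s, 2 ≤ n)
    (heq : (#s + 1) * ∏ n ∈ s, (n - 1) = ∏ n ∈ s, n) : s = Icc 2 (#s + 1) := by
  induction s using Finset.induction_on_max with
  | empty => rfl
  | insert a s hlt ih =>
    have hs' : ∀ n ∈ s, 2 ≤ n := fun n hn => hs n (mem_insert_of_mem hn)
    have ha := card_add_two_le_of_forall_lt hs' hlt (hs a (mem_insert_self a s))
    have has : a ∉ s := fun h => (hlt a h).false
    rw [prod_insert has, prod_insert has, card_insert_of_notMem has] at heq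
    set P := ∏ n ∈ s, n
    set Q := ∏ n ∈ s, (n - 1)
    have hQ : 0 < Q := prod_pos fun n hn => by have := hs' n hn; omega
    have hle : a * P ≤ a * ((#s + 1) * Q) :=
      Nat.mul_le_mul_left a (prod_le_card_add_one_mul_prod_sub_one s hs')
    have hsplit : ((#s + 1) * a + (a - (#s + 2))) * Q = a * P := by
      rw [← add_two_mul_sub_one_eq ha, ← heq]; ring
    have hmax : a = #s + 2 := by
      have : (a - (#s + 2)) * Q = 0 := by nlinarith
      rcases Nat.mul_eq_zero.1 this with h | h <;> omega
    have heq_s : (#s + 1) * Q = P := by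
      rw [hmax, Nat.sub_self, add_zero] at hsplit
      exact Nat.eq_of_mul_eq_mul_left (show 0 < #s + 2 by omega) (by rw [← hsplit]; ring)
    rw [card_insert_of_notMem has, ih hs' heq_s, card_Icc, hmax]
    exact insert_Icc_right_eq_Icc_add_one (by omega)

end Nat

theorem eq_singleton_or_eq_pair_of_prime_of_eq_Icc {s : Finset ℕ} (hs : ∀ q ∈ s, q.Prime)
    (hne : s.Nonempty) (h : s = Icc 2 (#s + 1)) : s = {2} ∨ s = {2, 3} := by
  generalize hk : #s = k at h
  subst h
  have hk3 : k ≤ 2 := by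
    by_contra! hk3
    exact absurd (hs 4 (mem_Icc.2 ⟨by norm_num, by omega⟩)) (by norm_num)
  have hk0 : k ≠ 0 := by rintro rfl; simp at hne
  obtain rfl | rfl : k = 1 ∨ k = 2 := by omega
  · exact .inl (by decide)
  · exact .inr (by decide)

section

variable {r : ℕ} {p : ℕ → ℕ}

theorem add_two_le_of_strictMono_prime (hp : ∀ i < r, (p i).Prime)
    (hmono : ∀ i j, i < j → j < r → p i < p j) : ∀ i < r, i + 2 ≤ p i := by
  intro i hi
  induction i with
  | zero => exact (hp 0 hi).two_le
  | succ i ih => exact (ih (by omega)).trans_lt (hmono i (i + 1) (by omega) hi)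

theorem injOn_of_strictMono (hmono : ∀ i j, i < j → j < r → p i < p j) {I : Finset ℕ}
    (hI : I ⊆ range r) : Set.InjOn p I := by
  have : StrictMonoOn p (Set.Iio r) := fun i _ j hj hij => hmono i j hij hj
  exact this.injOn.mono fun i hi => mem_range.1 (hI hi)

theorem eq_zero_of_image_eq_singleton (hp : ∀ i < r, (p i).Prime)
    (hmono : ∀ i j, i < j → j < r → p i < p j) {I : Finset ℕ} (hI : I ⊆ range r)
    (h : I.image p = {2}) : I = {0} ∧ p 0 = 2 := by
  have hval : ∀ i ∈ I, p i = 2 := fun i hi => mem_singleton.1 (h ▸ mem_image_of_mem p hi)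
  have hzero : ∀ i ∈ I, i = 0 := fun i hi => by
    have := add_two_le_of_strictMono_prime hp hmono i (mem_range.1 (hI hi))
    have := hval i hi
    omega
  obtain ⟨i, hi⟩ : I.Nonempty := by simpa using congrArg Finset.Nonempty h
  have h0 : 0 ∈ I := hzero i hi ▸ hi
  exact ⟨eq_singleton_iff_unique_mem.2 ⟨h0, hzero⟩, hval 0 h0⟩

theorem eq_zero_one_of_image_eq_pair (hp : ∀ i < r, (p i).Prime)
    (hmono : ∀ i j, i < j → j < r → p i < p j) {I : Finset ℕ} (hI : I ⊆ range r)
    (h : I.image p = {2, 3}) : I = {0, 1} ∧ p 0 = 2 ∧ p 1 = 3 := by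
  have hval : ∀ i ∈ I, p i = 2 ∨ p i = 3 := fun i hi => by
    simpa [h] using mem_image_of_mem p hi
  have hsub : I ⊆ {0, 1} := fun i hi => by
    have := add_two_le_of_strictMono_prime hp hmono i (mem_range.1 (hI hi))
    have := hval i hi
    simp only [mem_insert, mem_singleton]
    omega
  have hcard : #I = 2 := by
    rw [← card_image_of_injOn (injOn_of_strictMono hmono hI), h]
    rfl
  have hI01 : I = {0, 1} := eq_of_subset_of_card_le hsub (by rw [hcard]; rfl)
  subst hI01
  have h1r : 1 < r := mem_range.1 (hI (by simp))
  have := hmono 0 1 one_pos h1r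
  have := hval 0 (by simp)
  have := hval 1 (by simp)
  exact ⟨rfl, by omega, by omega⟩

end

theorem stmt_1 (r : ℕ) (p : ℕ → ℕ)
    (hp : ∀ i < r, (p i).Prime)
    (hmono : ∀ i j, i < j → j < r → p i < p j)
    (I : Finset ℕ) (hI : I ⊆ Finset.range r) (hne : I.Nonempty)
    (t : ℕ) (ht : t = I.card) :
    (t + 1) * Nat.totient (∏ i ∈ I, p i) ≥ ∏ i ∈ I, p i ∧
    ((t + 1) * Nat.totient (∏ i ∈ I, p i) = ∏ i ∈ I, p i ↔
      (t = 1 ∧ I = {0} ∧ p 0 = 2) ∨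
      (t = 2 ∧ I = {0, 1} ∧ p 0 = 2 ∧ p 1 = 3)) := by
  subst ht
  have hinj := injOn_of_strictMono hmono hI
  have hprime : ∀ q ∈ I.image p, q.Prime := by
    simpa using fun i hi => hp i (mem_range.1 (hI hi))
  have hprod : ∏ i ∈ I, p i = ∏ q ∈ I.image p, q := by rw [prod_image hinj]
  rw [hprod, Nat.totient_prod_of_prime_s1 hprime, ← card_image_of_injOn hinj]
  have htwo : ∀ q ∈ I.image p, 2 ≤ q := fun q hq => (hprime q hq).two_le
  refine ⟨Nat.prod_le_card_add_one_mul_prod_sub_one _ htwo, fun heq => ?_, ?_⟩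
  · rcases eq_singleton_or_eq_pair_of_prime_of_eq_Icc hprime (hne.image p)
      (Nat.eq_Icc_of_card_add_one_mul_prod_sub_one_eq_prod _ htwo heq) with h | h
    · obtain ⟨rfl, h0⟩ := eq_zero_of_image_eq_singleton hp hmono hI h
      exact .inl ⟨by rw [h]; rfl, rfl, h0⟩
    · obtain ⟨rfl, h0, h1⟩ := eq_zero_one_of_image_eq_pair hp hmono hI h
      exact .inr ⟨by rw [h]; rfl, rfl, h0, h1⟩
  · rintro (⟨-, rfl, h0⟩ | ⟨-, rfl, h0, h1⟩)
    · simp [h0]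
    · simp [h0, h1]
end

section
/- Let n = p_1^{n_1}⋯p_r^{n_r} with p_1 < ... < p_r primes, and let a, b ∈ [r] with a ≠ b, s < n_a and t < n_b. Then ∑_{k=1}^{s}∑_{l=1}^{t} φ(n/(p_a^k p_b^l)) = (n/(p_1⋯p_r))·φ(p_1⋯p_r/(p_a p_b))·(1 - 1/p_a^s)·(1 - 1/p_b^t). -/
/-!
Every `n / (p_a^k p_b^l)` with `k < n_a`, `l < n_b` has the same prime factors as `n`, and
`φ(m) / m` depends only on the prime factors of `m`; hence
`φ(n / (p_a^k p_b^l)) = φ(n) / (p_a^k p_b^l)` and the double sum is `φ(n)` times a product of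
two finite geometric series. Writing `φ(n) = (n / P) φ(P)` for the squarefree kernel
`P = p_1 ⋯ p_r` and splitting off the factors `p_a - 1`, `p_b - 1` of `φ(P)` turns these series
into `1 - p_a^{-s}` and `1 - p_b^{-t}`.
-/

open Finset

theorem Finset.mul_dvd_prod_of_ne {ι M : Type*} [CommMonoid M] [DecidableEq ι] {s : Finset ι}
    {a b : ι} (f : ι → M) (ha : a ∈ s) (hb : b ∈ s) (hab : a ≠ b) :
    f a * f b ∣ ∏ i ∈ s, f i := by
  rw [← prod_pair hab]
  exact prod_dvd_prod_of_subset _ _ _ (insert_subset ha (singleton_subset_iff.mpr hb))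

theorem sub_one_mul_sum_Icc_inv_pow {K : Type*} [Field K] {x : K} (hx : x ≠ 0) (s : ℕ) :
    (x - 1) * ∑ k ∈ Icc 1 s, (x ^ k)⁻¹ = 1 - (x ^ s)⁻¹ := by
  induction s with
  | zero => simp
  | succ s ih =>
    rw [sum_Icc_succ_top (by omega), mul_add, ih]
    field_simp
    ring

namespace Nat

theorem squarefree_prod_of_injOn {ι : Type*} {s : Finset ι} {p : ι → ℕ}
    (hp : ∀ i ∈ s, (p i).Prime) (hinj : Set.InjOn p s) : Squarefree (∏ i ∈ s, p i) := by
  refine squarefree_prod_of_pairwise_isCoprime (fun i hi j hj hij ↦ ?_)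
    fun i hi ↦ (hp i hi).squarefree
  rw [Function.onFun, ← coprime_iff_isRelPrime]
  exact (coprime_primes (hp i hi) (hp j hj)).mpr (hinj.ne hi hj hij)

theorem totient_prime_mul_of_squarefree {p m : ℕ} (hp : p.Prime) (h : Squarefree (p * m)) :
    φ (p * m) = (p - 1) * φ m := by
  rw [totient_mul (coprime_of_squarefree_mul h), totient_prime hp]

theorem totient_eq_of_squarefree_of_mul_dvd {m x y : ℕ} (hx : x.Prime) (hy : y.Prime)
    (hm : Squarefree m) (hxy : x * y ∣ m) : φ m = (x - 1) * ((y - 1) * φ (m / (x * y))) := by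
  obtain ⟨c, rfl⟩ := hxy
  rw [Nat.mul_div_cancel_left _ (mul_pos hx.pos hy.pos)]
  rw [mul_assoc] at hm ⊢
  rw [totient_prime_mul_of_squarefree hx hm, totient_prime_mul_of_squarefree hy hm.of_mul_right]

theorem primeFactors_prod_pow {ι : Type*} (s : Finset ι) (g f : ι → ℕ)
    (hg : ∀ i ∈ s, g i ≠ 0) (hf : ∀ i ∈ s, f i ≠ 0) :
    (∏ i ∈ s, g i ^ f i).primeFactors = (∏ i ∈ s, g i).primeFactors := by
  induction s using Finset.cons_induction with
  | empty => simp
  | cons a s has ih =>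
    simp only [forall_mem_cons] at hg hf
    rw [prod_cons, prod_cons, primeFactors_mul (pow_ne_zero _ hg.1)
      (prod_ne_zero_iff.mpr fun i hi ↦ pow_ne_zero _ (hg.2 i hi)),
      primeFactors_mul hg.1 (prod_ne_zero_iff.mpr hg.2), primeFactors_pow _ hf.1, ih hg.2 hf.2]

theorem primeFactors_pow_mul_pow_subset {x y : ℕ} (hx : x ≠ 0) (hy : y ≠ 0) (k l : ℕ) :
    (x ^ k * y ^ l).primeFactors ⊆ (x * y).primeFactors := by
  intro q hq
  obtain ⟨hq, hdvd, -⟩ := mem_primeFactors.mp hq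
  refine mem_primeFactors.mpr ⟨hq, ?_, mul_ne_zero hx hy⟩
  rcases hq.dvd_mul.mp hdvd with h | h
  · exact dvd_mul_of_dvd_left (hq.dvd_of_dvd_pow h) y
  · exact dvd_mul_of_dvd_right (hq.dvd_of_dvd_pow h) x

theorem primeFactors_div_of_mul_dvd {m d c : ℕ} (hm : m ≠ 0) (hdc : d * c ∣ m)
    (hd : d.primeFactors ⊆ c.primeFactors) : (m / d).primeFactors = m.primeFactors := by
  have hdm : d ∣ m := dvd_of_mul_right_dvd hdc
  have hmd : m / d ≠ 0 := fun h ↦ hm (by rw [← Nat.mul_div_cancel' hdm, h, mul_zero])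
  refine (primeFactors_mono (div_dvd_of_dvd hdm) hm).antisymm ?_
  conv_lhs => rw [← Nat.mul_div_cancel' hdm]
  rw [primeFactors_mul (ne_zero_of_dvd_ne_zero hm hdm) hmd, union_subset_iff]
  exact ⟨hd.trans (primeFactors_mono (dvd_div_of_mul_dvd hdc) hmd), subset_rfl⟩

theorem cast_totient_eq_of_primeFactors_eq {m m' : ℕ}
    (h : m.primeFactors = m'.primeFactors) (hm' : m' ≠ 0) :
    (φ m : ℚ) = m / m' * φ m' := by
  rw [totient_eq_mul_prod_factors, totient_eq_mul_prod_factors, h]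
  field_simp

theorem cast_totient_div_of_mul_dvd {m d c : ℕ} (hdc : d * c ∣ m)
    (hd : d.primeFactors ⊆ c.primeFactors) : (φ (m / d) : ℚ) = φ m / d := by
  rcases eq_or_ne m 0 with rfl | hm
  · simp
  rw [cast_totient_eq_of_primeFactors_eq (primeFactors_div_of_mul_dvd hm hdc hd) hm,
    cast_div_charZero (dvd_of_mul_right_dvd hdc)]
  have : (m : ℚ) ≠ 0 := by exact_mod_cast hm
  field_simp

theorem cast_totient_div_pow_mul_pow {m x y k l : ℕ} (hx : x ≠ 0) (hy : y ≠ 0)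
    (h : x ^ (k + 1) * y ^ (l + 1) ∣ m) :
    (φ (m / (x ^ k * y ^ l)) : ℚ) = φ m * (x ^ k : ℚ)⁻¹ * (y ^ l : ℚ)⁻¹ := by
  have hdvd : x ^ k * y ^ l * (x * y) ∣ m := by
    rwa [mul_mul_mul_comm, ← pow_succ, ← pow_succ]
  rw [cast_totient_div_of_mul_dvd hdvd (primeFactors_pow_mul_pow_subset hx hy k l)]
  push_cast
  ring

end Nat

theorem stmt_7_general (r : ℕ) (p e : ℕ → ℕ)
    (hp : ∀ i < r, (p i).Prime)
    (hmono : ∀ i j, i < j → j < r → p i < p j)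
    (he : ∀ i < r, 1 ≤ e i)
    (n : ℕ) (hn : n = ∏ i ∈ Finset.range r, p i ^ e i)
    (P : ℕ) (hP : P = ∏ i ∈ Finset.range r, p i)
    (a b : ℕ) (ha : a < r) (hb : b < r) (hab : a ≠ b)
    (s t : ℕ) (hs : s < e a) (ht : t < e b) :
    (∑ k ∈ Finset.Icc 1 s, ∑ l ∈ Finset.Icc 1 t,
        (Nat.totient (n / (p a ^ k * p b ^ l)) : ℚ)) =
      (n : ℚ) / P * Nat.totient (P / (p a * p b)) *
        (1 - 1 / (p a : ℚ) ^ s) * (1 - 1 / (p b : ℚ) ^ t) := by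
  have hpa := hp a ha
  have hpb := hp b hb
  have hp0 : ∀ i ∈ range r, p i ≠ 0 := fun i hi ↦ (hp i (mem_range.mp hi)).ne_zero
  have hnP : n.primeFactors = P.primeFactors := by
    rw [hn, hP]
    exact Nat.primeFactors_prod_pow _ _ _ hp0
      fun i hi ↦ Nat.one_le_iff_ne_zero.mp (he i (mem_range.mp hi))
  have hsq : Squarefree P :=
    hP ▸ Nat.squarefree_prod_of_injOn (fun i hi ↦ hp i (mem_range.mp hi))
      (coe_range r ▸ StrictMonoOn.injOn fun i _ j hj hij ↦ hmono i j hij hj)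
  have htotP := Nat.totient_eq_of_squarefree_of_mul_dvd hpa hpb hsq
    (hP ▸ mul_dvd_prod_of_ne p (mem_range.mpr ha) (mem_range.mpr hb) hab)
  have hpow_dvd : p a ^ e a * p b ^ e b ∣ n :=
    hn ▸ mul_dvd_prod_of_ne (fun i ↦ p i ^ e i) (mem_range.mpr ha) (mem_range.mpr hb) hab
  rw [sum_congr rfl fun k hk ↦ sum_congr rfl fun l hl ↦ Nat.cast_totient_div_pow_mul_pow
      hpa.ne_zero hpb.ne_zero (dvd_trans (mul_dvd_mul (pow_dvd_pow _ (by grind))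
        (pow_dvd_pow _ (by grind))) hpow_dvd),
    ← sum_mul_sum, ← mul_sum,
    Nat.cast_totient_eq_of_primeFactors_eq hnP (hP ▸ prod_ne_zero_iff.mpr hp0), htotP]
  simp only [one_div]
  rw [← sub_one_mul_sum_Icc_inv_pow (Nat.cast_ne_zero.mpr hpa.ne_zero) s,
    ← sub_one_mul_sum_Icc_inv_pow (Nat.cast_ne_zero.mpr hpb.ne_zero) t]
  push_cast [hpa.one_le, hpb.one_le]
  ring

theorem stmt_7 (r : ℕ) (hr : 2 ≤ r) (p e : ℕ → ℕ)
    (hp : ∀ i < r, (p i).Prime)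
    (hmono : ∀ i j, i < j → j < r → p i < p j)
    (he : ∀ i < r, 1 ≤ e i)
    (n : ℕ) (hn : n = ∏ i ∈ Finset.range r, p i ^ e i)
    (P : ℕ) (hP : P = ∏ i ∈ Finset.range r, p i)
    (a b : ℕ) (ha : a < r) (hb : b < r) (hab : a ≠ b)
    (s t : ℕ) (hs1 : 1 ≤ s) (ht1 : 1 ≤ t) (hs : s < e a) (ht : t < e b) :
    (∑ k ∈ Finset.Icc 1 s, ∑ l ∈ Finset.Icc 1 t,
        (Nat.totient (n / (p a ^ k * p b ^ l)) : ℚ)) =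
      (n : ℚ) / P * Nat.totient (P / (p a * p b)) *
        (1 - 1 / (p a : ℚ) ^ s) * (1 - 1 / (p b : ℚ) ^ t) :=
  stmt_7_general r p e hp hmono he n hn P hP a b ha hb hab s t hs ht
end

section
/- Let n = p_1^{n_1}⋯p_r^{n_r} with r ≥ 2 and primes p_1 < ... < p_r, and let i < k in [r]. Then φ(n/p_i) ≥ p_k^{n_k - 1}·φ(n/p_k^{n_k}), with strict inequality unless (i,k) = (1,2), (p_1,p_2) = (2,3) and n_1 ≥ 2. -/
/-!
Write `n = a ^ e * (b ^ f * M)` with `a = p i < b = p k` and `M` prime to `a b`, and put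
`N = a ^ (e - 1) * M`, so that `n / a = b ^ f * N` and `n / b ^ f = a * N` with `b ∤ N`. Then
`φ (n / a) = b ^ (f - 1) * (b - 1) * φ N`, while `φ (a * N) ≤ a * φ N ≤ (b - 1) * φ N`.
Equality forces `a = b - 1`, i.e. `(a, b) = (2, 3)`, and `φ (a * N) = a * φ N`, i.e. `a ∣ N`,
i.e. `e ≥ 2`; since the primes increase, `p i = 2` and `p k = 3` force `i = 0` and `k = 1`.
-/

namespace Nat

theorem Prime.eq_two_of_prime_succ {a : ℕ} (ha : a.Prime) (hb : (a + 1).Prime) : a = 2 := by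
  rcases ha.eq_two_or_odd' with h | h
  · exact h
  · have := hb.even_iff.mp h.add_one
    have := ha.two_le
    omega

theorem totient_prime_mul_le {p : ℕ} (hp : p.Prime) (n : ℕ) : φ (p * n) ≤ p * φ n := by
  by_cases h : p ∣ n
  · exact (totient_mul_of_prime_of_dvd hp h).le
  · rw [totient_mul_of_prime_of_not_dvd hp h]
    exact Nat.mul_le_mul_right _ (sub_le p 1)

theorem dvd_of_totient_prime_mul_eq {p n : ℕ} (hp : p.Prime) (hn : n ≠ 0)
    (h : φ (p * n) = p * φ n) : p ∣ n := by
  by_contra hpn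
  rw [totient_mul_of_prime_of_not_dvd hp hpn] at h
  have := Nat.eq_of_mul_eq_mul_right (totient_pos.2 (pos_of_ne_zero hn)) h
  have := hp.pos
  omega

theorem totient_prime_pow_mul_of_not_dvd {p f n : ℕ} (hp : p.Prime) (hf : f ≠ 0)
    (hn : ¬p ∣ n) : φ (p ^ f * n) = p ^ (f - 1) * ((p - 1) * φ n) := by
  rw [totient_mul ((hp.coprime_iff_not_dvd.2 hn).pow_left f),
    totient_prime_pow hp (pos_of_ne_zero hf), mul_assoc]

theorem pow_pred_mul_totient_prime_mul_le {a b f N : ℕ} (ha : a.Prime) (hb : b.Prime)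
    (hab : a < b) (hf : f ≠ 0) (hN : ¬b ∣ N) :
    b ^ (f - 1) * φ (a * N) ≤ φ (b ^ f * N) := by
  rw [totient_prime_pow_mul_of_not_dvd hb hf hN]
  calc b ^ (f - 1) * φ (a * N) ≤ b ^ (f - 1) * (a * φ N) :=
        Nat.mul_le_mul_left _ (totient_prime_mul_le ha N)
    _ ≤ b ^ (f - 1) * ((b - 1) * φ N) := Nat.mul_le_mul_left _ (Nat.mul_le_mul_right _ (by omega))

theorem eq_two_and_eq_three_of_pow_pred_mul_totient_prime_mul_eq {a b f N : ℕ} (ha : a.Prime)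
    (hb : b.Prime) (hab : a < b) (hf : f ≠ 0) (hN : ¬b ∣ N)
    (h : b ^ (f - 1) * φ (a * N) = φ (b ^ f * N)) : a = 2 ∧ b = 3 ∧ a ∣ N := by
  rw [totient_prime_pow_mul_of_not_dvd hb hf hN] at h
  have h' : φ (a * N) = (b - 1) * φ N := Nat.eq_of_mul_eq_mul_left (pow_pos hb.pos _) h
  have hN0 : N ≠ 0 := by rintro rfl; exact hN (dvd_zero b)
  have hφN : 0 < φ N := totient_pos.2 (pos_of_ne_zero hN0)
  have hle := totient_prime_mul_le ha N
  -- `φ (a * N) ≤ a * φ N ≤ (b - 1) * φ N = φ (a * N)`, so both inequalities are equalities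
  have hba : b - 1 = a := le_antisymm (Nat.le_of_mul_le_mul_right (h' ▸ hle) hφN) (by omega)
  have ha2 : a = 2 := ha.eq_two_of_prime_succ (by rwa [← hba, Nat.sub_add_cancel hb.one_le])
  exact ⟨ha2, by omega, dvd_of_totient_prime_mul_eq ha hN0 (by rw [h', hba])⟩

theorem pow_pred_mul_totient_div_pow_le_totient_div {a b e f M : ℕ} (ha : a.Prime)
    (hb : b.Prime) (hab : a < b) (he : e ≠ 0) (hf : f ≠ 0) (haM : ¬a ∣ M) (hbM : ¬b ∣ M) :
    b ^ (f - 1) * φ (a ^ e * (b ^ f * M) / b ^ f) ≤ φ (a ^ e * (b ^ f * M) / a) ∧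
      (b ^ (f - 1) * φ (a ^ e * (b ^ f * M) / b ^ f) = φ (a ^ e * (b ^ f * M) / a) →
        a = 2 ∧ b = 3 ∧ 2 ≤ e) := by
  set N := a ^ (e - 1) * M
  have hae : a ^ e = a * a ^ (e - 1) := (mul_pow_sub_one he a).symm
  have hdiv_a : a ^ e * (b ^ f * M) / a = b ^ f * N := by
    rw [hae, show a * a ^ (e - 1) * (b ^ f * M) = a * (b ^ f * N) by ring,
      Nat.mul_div_cancel_left _ ha.pos]
  have hdiv_b : a ^ e * (b ^ f * M) / b ^ f = a * N := by
    rw [hae, show a * a ^ (e - 1) * (b ^ f * M) = b ^ f * (a * N) by ring,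
      Nat.mul_div_cancel_left _ (pow_pos hb.pos _)]
  have hbN : ¬b ∣ N := by
    rw [hb.prime.dvd_mul, not_or]
    exact ⟨fun h ↦ hab.ne' ((prime_dvd_prime_iff_eq hb ha).1 (hb.dvd_of_dvd_pow h)), hbM⟩
  rw [hdiv_a, hdiv_b]
  refine ⟨pow_pred_mul_totient_prime_mul_le ha hb hab hf hbN, fun h ↦ ?_⟩
  obtain ⟨ha2, hb3, haN⟩ :=
    eq_two_and_eq_three_of_pow_pred_mul_totient_prime_mul_eq ha hb hab hf hbN h
  refine ⟨ha2, hb3, ?_⟩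
  by_contra he1
  exact haM (by simpa [N, show e - 1 = 0 by omega] using haN)

end Nat

theorem Nat.Prime.not_dvd_prod_pow {ι : Type*} {s : Finset ι} {p e : ι → ℕ} {q : ℕ} (hq : q.Prime)
    (hp : ∀ j ∈ s, (p j).Prime ∧ p j ≠ q) : ¬q ∣ ∏ j ∈ s, p j ^ e j := by
  rw [Prime.dvd_finsetProd_iff hq.prime]
  rintro ⟨j, hj, hdvd⟩
  exact (hp j hj).2 ((Nat.prime_dvd_prime_iff_eq hq (hp j hj).1).1 (hq.dvd_of_dvd_pow hdvd)).symm

theorem Finset.exists_prod_pow_eq_pow_mul_pow_mul {ι : Type*} [DecidableEq ι] {s : Finset ι}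
    {p : ι → ℕ} (e : ι → ℕ) (hp : ∀ j ∈ s, (p j).Prime) (hinj : Set.InjOn p s) {i k : ι}
    (hi : i ∈ s) (hk : k ∈ s) (hik : i ≠ k) :
    ∃ M, ∏ j ∈ s, p j ^ e j = p i ^ e i * (p k ^ e k * M) ∧ ¬p i ∣ M ∧ ¬p k ∣ M := by
  have hk' : k ∈ s.erase i := mem_erase.2 ⟨hik.symm, hk⟩
  have hM : ∀ l ∈ s, (l = i ∨ l = k) → ¬p l ∣ ∏ j ∈ (s.erase i).erase k, p j ^ e j :=
    fun l hl hlik ↦ Nat.Prime.not_dvd_prod_pow (hp l hl) fun j hj ↦ by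
      simp only [mem_erase] at hj
      exact ⟨hp j hj.2.2, hinj.ne hj.2.2 hl (by rcases hlik with rfl | rfl <;> tauto)⟩
  refine ⟨_, ?_, hM i hi (.inl rfl), hM k hk (.inr rfl)⟩
  rw [← mul_prod_erase _ _ hi, ← mul_prod_erase _ _ hk']

theorem StrictMonoOn.add_le_of_iio {p : ℕ → ℕ} {r c : ℕ} (hmono : StrictMonoOn p (Set.Iio r))
    (h0 : c ≤ p 0) : ∀ j < r, j + c ≤ p j
  | 0, _ => by simpa using h0
  | j + 1, hj => by
    have := hmono (show j < r by omega) (show j + 1 < r from hj) j.lt_succ_self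
    have := add_le_of_iio hmono h0 j (by omega)
    omega

theorem stmt_8_general (r : ℕ) (p e : ℕ → ℕ)
    (hp : ∀ i < r, (p i).Prime)
    (hmono : ∀ i j, i < j → j < r → p i < p j)
    (he : ∀ i < r, 1 ≤ e i)
    (n : ℕ) (hn : n = ∏ i ∈ Finset.range r, p i ^ e i)
    (i k : ℕ) (hik : i < k) (hk : k < r) :
    Nat.totient (n / p i) ≥ p k ^ (e k - 1) * Nat.totient (n / p k ^ e k) ∧
    (Nat.totient (n / p i) = p k ^ (e k - 1) * Nat.totient (n / p k ^ e k) →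
      i = 0 ∧ k = 1 ∧ p 0 = 2 ∧ p 1 = 3 ∧ 2 ≤ e 0) := by
  have hi : i < r := hik.trans hk
  have hstrict : StrictMonoOn p (Set.Iio r) := fun a _ b hb hab ↦ hmono a b hab hb
  obtain ⟨M, hprod, hiM, hkM⟩ := Finset.exists_prod_pow_eq_pow_mul_pow_mul e
    (fun j hj ↦ hp j (Finset.mem_range.1 hj)) (by simpa using hstrict.injOn)
    (Finset.mem_range.2 hi) (Finset.mem_range.2 hk) hik.ne
  obtain ⟨hle, heq⟩ := Nat.pow_pred_mul_totient_div_pow_le_totient_div (hp i hi) (hp k hk)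
    (hmono i k hik hk) (Nat.one_le_iff_ne_zero.1 (he i hi)) (Nat.one_le_iff_ne_zero.1 (he k hk))
    hiM hkM
  rw [hn, hprod]
  refine ⟨hle, fun h ↦ ?_⟩
  obtain ⟨hpi, hpk, hei⟩ := heq h.symm
  have hindex := hstrict.add_le_of_iio (hp 0 (by omega)).two_le
  obtain rfl : i = 0 := by have := hindex i hi; omega
  obtain rfl : k = 1 := by have := hindex k hk; omega
  exact ⟨rfl, rfl, hpi, hpk, hei⟩

theorem stmt_8 (r : ℕ) (hr : 2 ≤ r) (p e : ℕ → ℕ)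
    (hp : ∀ i < r, (p i).Prime)
    (hmono : ∀ i j, i < j → j < r → p i < p j)
    (he : ∀ i < r, 1 ≤ e i)
    (n : ℕ) (hn : n = ∏ i ∈ Finset.range r, p i ^ e i)
    (i k : ℕ) (hik : i < k) (hk : k < r) :
    Nat.totient (n / p i) ≥ p k ^ (e k - 1) * Nat.totient (n / p k ^ e k) ∧
    (Nat.totient (n / p i) = p k ^ (e k - 1) * Nat.totient (n / p k ^ e k) →
      i = 0 ∧ k = 1 ∧ p 0 = 2 ∧ p 1 = 3 ∧ 2 ≤ e 0) :=
  stmt_8_general r p e hp hmono he n hn i k hik hk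
end

section
/- Let n = p_1^{n_1}⋯p_r^{n_r} with r ≥ 2 and primes p_1 < ... < p_r, and let i < k in [r]. Then φ(n/p_i) ≥ φ(n/p_k), with equality if and only if (i,k) = (1,2), (p_1,p_2) = (2,3), n_1 ≥ 2 and n_2 = 1. -/
/-!
Writing `n = p * (n / p)` for a prime `p ∣ n`, one has `φ n = φ (n / p) * c_p` with `c_p = p` if
`p ∣ n / p` and `c_p = p - 1` otherwise. For primes `p < q` dividing `n` this gives
`c_p ≤ p ≤ q - 1 ≤ c_q`, hence `φ (n / q) ≤ φ (n / p)`, with equality exactly when `c_p = c_q`,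
i.e. when `p` and `q = p + 1` are consecutive primes, `p² ∣ n` and `q² ∤ n`.
-/

open Finset

namespace Nat

theorem totient_div_prime_mul {p n : ℕ} (hp : p.Prime) (hpn : p ∣ n) :
    φ (n / p) * (if p ∣ n / p then p else p - 1) = φ n := by
  obtain ⟨m, rfl⟩ := hpn
  rw [Nat.mul_div_cancel_left _ hp.pos, mul_comm]
  split_ifs with hpm
  · exact (totient_mul_of_prime_of_dvd hp hpm).symm
  · exact (totient_mul_of_prime_of_not_dvd hp hpm).symm

theorem Prime.eq_two_of_succ_prime {p : ℕ} (hp : p.Prime) (hp1 : (p + 1).Prime) : p = 2 :=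
  hp.even_iff.mp (by simpa using hp1.even_sub_one (by have := hp.two_le; omega))

theorem Prime.ite_sub_one_eq_ite_sub_one_iff {p q : ℕ} (hp : p.Prime) (hq : q.Prime) (hpq : p < q)
    (P Q : Prop) [Decidable P] [Decidable Q] :
    (if P then p else p - 1) = (if Q then q else q - 1) ↔ p = 2 ∧ q = 3 ∧ P ∧ ¬Q := by
  have := hp.two_le
  constructor
  · intro h
    split_ifs at h with hP hQ <;> try omega
    obtain rfl : q = p + 1 := by omega
    obtain rfl := hp.eq_two_of_succ_prime hq
    exact ⟨rfl, rfl, hP, hQ⟩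
  · rintro ⟨rfl, rfl, hP, hQ⟩
    simp [hP, hQ]

theorem totient_div_le_totient_div_of_lt {n p q : ℕ} (hn : n ≠ 0) (hp : p.Prime) (hq : q.Prime)
    (hpn : p ∣ n) (hqn : q ∣ n) (hpq : p < q) :
    φ (n / q) ≤ φ (n / p) ∧
      (φ (n / p) = φ (n / q) ↔ p = 2 ∧ q = 3 ∧ p ∣ n / p ∧ ¬q ∣ n / q) := by
  set cp := if p ∣ n / p then p else p - 1
  set cq := if q ∣ n / q then q else q - 1
  have hc : 0 < cp ∧ cp ≤ cq := by
    have := hp.two_le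
    constructor <;> simp only [cp, cq] <;> split_ifs <;> omega
  have hφ : φ (n / p) * cp = φ (n / q) * cq := by
    rw [totient_div_prime_mul hp hpn, totient_div_prime_mul hq hqn]
  have hφ_pos : 0 < φ (n / p) := totient_pos.mpr (Nat.div_pos (le_of_dvd (by omega) hpn) hp.pos)
  refine ⟨le_of_mul_le_mul_right ?_ hc.1, ?_⟩
  · calc φ (n / q) * cp ≤ φ (n / q) * cq := Nat.mul_le_mul_left _ hc.2
      _ = φ (n / p) * cp := hφ.symm
  rw [← hp.ite_sub_one_eq_ite_sub_one_iff hq hpq]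
  constructor
  · intro h
    rw [h] at hφ hφ_pos
    exact Nat.eq_of_mul_eq_mul_left hφ_pos hφ
  · intro h
    rw [← show cp = cq from h] at hφ
    exact Nat.eq_of_mul_eq_mul_right hc.1 hφ

theorem factorization_prod_pow_apply {ι : Type*} {s : Finset ι} {p e : ι → ℕ}
    (hp : ∀ i ∈ s, (p i).Prime) (hinj : Set.InjOn p s) {j : ι} (hj : j ∈ s) :
    (∏ i ∈ s, p i ^ e i).factorization (p j) = e j := by
  rw [factorization_prod fun i hi => pow_ne_zero _ (hp i hi).ne_zero, Finsupp.finsetSum_apply,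
    sum_eq_single j]
  · simp [(hp j hj).factorization_self]
  · intro i hi hij
    simp [(hp i hi).factorization, hinj.ne hi hj hij]
  · exact absurd hj

theorem Prime.dvd_div_self_iff {p n : ℕ} (hp : p.Prime) (hn : n ≠ 0) (hpn : p ∣ n) :
    p ∣ n / p ↔ 2 ≤ n.factorization p := by
  rw [hp.dvd_iff_one_le_factorization (Nat.div_ne_zero_iff_of_dvd hpn |>.mpr ⟨hn, hp.ne_zero⟩),
    factorization_div hpn, hp.factorization]
  simp only [Finsupp.coe_tsub, Pi.sub_apply, Finsupp.single_eq_same]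
  omega

theorem eq_zero_and_eq_one_of_strictMonoOn {p : ℕ → ℕ} {r i k : ℕ} (hp0 : 2 ≤ p 0)
    (hmono : StrictMonoOn p (Set.Iio r)) (hik : i < k) (hk : k < r) (hi : p i = 2) (hk3 : p k = 3) :
    i = 0 ∧ k = 1 := by
  have hlt : ∀ a b, a < b → b < r → p a < p b := fun a b hab hb =>
    hmono (Set.mem_Iio.mpr (hab.trans hb)) (Set.mem_Iio.mpr hb) hab
  obtain rfl : i = 0 := by
    by_contra h0
    have := hlt 0 i (by omega) (by omega)
    omega
  refine ⟨rfl, ?_⟩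
  by_contra h1
  have := hlt 0 1 (by omega) (by omega)
  have := hlt 1 k (by omega) hk
  omega

end Nat

theorem stmt_9_general (r : ℕ) (p e : ℕ → ℕ)
    (hp : ∀ i < r, (p i).Prime)
    (hmono : ∀ i j, i < j → j < r → p i < p j)
    (he : ∀ i < r, 1 ≤ e i)
    (n : ℕ) (hn : n = ∏ i ∈ Finset.range r, p i ^ e i)
    (i k : ℕ) (hik : i < k) (hk : k < r) :
    Nat.totient (n / p i) ≥ Nat.totient (n / p k) ∧
    (Nat.totient (n / p i) = Nat.totient (n / p k) ↔
      i = 0 ∧ k = 1 ∧ p 0 = 2 ∧ p 1 = 3 ∧ 2 ≤ e 0 ∧ e 1 = 1) := by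
  have hi : i < r := hik.trans hk
  have hp' : ∀ j ∈ range r, (p j).Prime := fun j hj => hp j (mem_range.mp hj)
  have hsm : StrictMonoOn p (Set.Iio r) := fun a _ b hb hab => hmono a b hab hb
  have hn0 : n ≠ 0 := hn ▸ prod_ne_zero_iff.mpr fun j hj => pow_ne_zero _ (hp' j hj).ne_zero
  have hdvd : ∀ j < r, p j ∣ n := fun j hj => hn ▸
    (dvd_pow_self _ (by have := he j hj; omega)).trans (dvd_prod_of_mem _ (mem_range.mpr hj))
  have hsq : ∀ j < r, p j ∣ n / p j ↔ 2 ≤ e j := fun j hj => by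
    rw [(hp j hj).dvd_div_self_iff hn0 (hdvd j hj), hn, Nat.factorization_prod_pow_apply hp'
      (coe_range r ▸ hsm.injOn) (mem_range.mpr hj)]
  obtain ⟨hle, heq⟩ := Nat.totient_div_le_totient_div_of_lt hn0 (hp i hi) (hp k hk) (hdvd i hi)
    (hdvd k hk) (hmono i k hik hk)
  refine ⟨hle, heq.trans ?_⟩
  rw [hsq i hi, hsq k hk]
  constructor
  · rintro ⟨hpi, hpk, hei, hek⟩
    obtain ⟨rfl, rfl⟩ :=
      Nat.eq_zero_and_eq_one_of_strictMonoOn (hp 0 (by omega)).two_le hsm hik hk hpi hpk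
    exact ⟨rfl, rfl, hpi, hpk, hei, by have := he 1 hk; omega⟩
  · rintro ⟨rfl, rfl, hpi, hpk, hei, hek⟩
    exact ⟨hpi, hpk, hei, by omega⟩

theorem stmt_9 (r : ℕ) (hr : 2 ≤ r) (p e : ℕ → ℕ)
    (hp : ∀ i < r, (p i).Prime)
    (hmono : ∀ i j, i < j → j < r → p i < p j)
    (he : ∀ i < r, 1 ≤ e i)
    (n : ℕ) (hn : n = ∏ i ∈ Finset.range r, p i ^ e i)
    (i k : ℕ) (hik : i < k) (hk : k < r) :
    Nat.totient (n / p i) ≥ Nat.totient (n / p k) ∧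
    (Nat.totient (n / p i) = Nat.totient (n / p k) ↔
      i = 0 ∧ k = 1 ∧ p 0 = 2 ∧ p 1 = 3 ∧ 2 ≤ e 0 ∧ e 1 = 1) :=
  stmt_9_general r p e hp hmono he n hn i k hik hk
end

section
/- Let r ≥ 3, n = p_1^{n_1}⋯p_r^{n_r} with primes p_1 < ... < p_r, and define β_a^s = φ(n) + (n/(p_1⋯p_r))·(1/p_a^{s-1})·[ (p_1⋯p_r)/p_a + φ((p_1⋯p_r)/p_a)·(p_a^{s-1} − 2) ] for a ∈ [r], s ∈ [n_a]. Fix a with n_a ≥ 2. If 2·φ((p_1⋯p_r)/p_a) > (p_1⋯p_r)/p_a then β_a^1 < β_a^2 < ... < β_a^{n_a}; if 2·φ((p_1⋯p_r)/p_a) < (p_1⋯p_r)/p_a then β_a^1 > β_a^2 > ... > β_a^{n_a}. -/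
noncomputable def beta (r : ℕ) (p e : ℕ → ℕ) (a s : ℕ) : ℚ :=
  (Nat.totient (∏ i ∈ Finset.range r, p i ^ e i) : ℚ) +
    ((∏ i ∈ Finset.range r, p i ^ e i : ℕ) : ℚ) /
        ((∏ i ∈ Finset.range r, p i : ℕ) : ℚ) *
      (1 / (p a : ℚ) ^ (s - 1)) *
      (((∏ i ∈ Finset.range r, p i : ℕ) : ℚ) / (p a : ℚ) +
        (Nat.totient ((∏ i ∈ Finset.range r, p i) / p a) : ℚ) *
          ((p a : ℚ) ^ (s - 1) - 2))

/-!
With `P = p_1⋯p_r`, `Q = P / p_a` and `N = n`, clearing the bracket in the definition gives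
`β_a^{s+1} = φ(N) + (N/P)·φ(Q) + (N/P)·(Q - 2φ(Q)) / p_a^s`. So `s ↦ β_a^{s+1}` is a constant
plus a multiple of the strictly decreasing `p_a^{-s}`, and it increases or decreases according
to the sign of `Q - 2φ(Q)`.
-/

open Finset
open scoped Nat

theorem beta_succ_eq (r : ℕ) (p e : ℕ → ℕ) {a : ℕ} (hpa : p a ≠ 0)
    (hdvd : p a ∣ ∏ i ∈ range r, p i) (s : ℕ) :
    beta r p e a (s + 1) =
      (φ (∏ i ∈ range r, p i ^ e i) : ℚ) +
        ((∏ i ∈ range r, p i ^ e i : ℕ) : ℚ) / ((∏ i ∈ range r, p i : ℕ) : ℚ) *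
          (φ ((∏ i ∈ range r, p i) / p a) : ℚ) +
        ((∏ i ∈ range r, p i ^ e i : ℕ) : ℚ) / ((∏ i ∈ range r, p i : ℕ) : ℚ) *
            (((∏ i ∈ range r, p i) / p a : ℕ) -
              2 * (φ ((∏ i ∈ range r, p i) / p a) : ℚ)) / (p a : ℚ) ^ s := by
  have hpa' : (p a : ℚ) ≠ 0 := Nat.cast_ne_zero.mpr hpa
  rw [beta, Nat.add_sub_cancel, Nat.cast_div hdvd hpa']
  field_simp
  ring

theorem div_pow_succ_lt_div_pow {α : Type*} [Field α] [LinearOrder α] [IsStrictOrderedRing α]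
    {x D : α} (hx : 1 < x) (hD : 0 < D) (t : ℕ) : D / x ^ (t + 1) < D / x ^ t :=
  div_lt_div_of_pos_left hD (pow_pos (zero_lt_one.trans hx) t)
    (pow_lt_pow_right₀ hx t.lt_succ_self)

theorem stmt_10_general (r : ℕ) (p e : ℕ → ℕ)
    (hp : ∀ i < r, (p i).Prime)
    (a : ℕ) (ha : a < r) :
    (2 * Nat.totient ((∏ i ∈ Finset.range r, p i) / p a) >
        (∏ i ∈ Finset.range r, p i) / p a →
      ∀ s, 1 ≤ s → s < e a → beta r p e a s < beta r p e a (s + 1)) ∧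
    (2 * Nat.totient ((∏ i ∈ Finset.range r, p i) / p a) <
        (∏ i ∈ Finset.range r, p i) / p a →
      ∀ s, 1 ≤ s → s < e a → beta r p e a s > beta r p e a (s + 1)) := by
  have hpa : (p a).Prime := hp a ha
  have hpa1 : (1 : ℚ) < p a := by exact_mod_cast hpa.one_lt
  have hdvd : p a ∣ ∏ i ∈ range r, p i := dvd_prod_of_mem _ (mem_range.mpr ha)
  have hratio :
      (0 : ℚ) < ((∏ i ∈ range r, p i ^ e i : ℕ) : ℚ) / ((∏ i ∈ range r, p i : ℕ) : ℚ) := by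
    have hpos : ∀ i ∈ range r, 0 < p i := fun i hi => (hp i (mem_range.mp hi)).pos
    exact div_pos (by exact_mod_cast prod_pos fun i hi => pow_pos (hpos i hi) _)
      (by exact_mod_cast prod_pos hpos)
  set Q := (∏ i ∈ range r, p i) / p a
  refine ⟨fun hgt s hs _ => ?_, fun hlt s hs _ => ?_⟩ <;>
    obtain ⟨t, rfl⟩ := Nat.exists_eq_add_of_le' hs <;>
    rw [beta_succ_eq r p e hpa.ne_zero hdvd, beta_succ_eq r p e hpa.ne_zero hdvd]
  · have hQ : (Q : ℚ) < 2 * φ Q := by exact_mod_cast hgt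
    have hD := mul_neg_of_pos_of_neg hratio (sub_neg.mpr hQ)
    have := div_pow_succ_lt_div_pow hpa1 (neg_pos.mpr hD) t
    rw [neg_div, neg_div] at this
    linarith
  · have hQ : 2 * (φ Q : ℚ) < Q := by exact_mod_cast hlt
    have hD := mul_pos hratio (sub_pos.mpr hQ)
    linarith [div_pow_succ_lt_div_pow hpa1 hD t]

theorem stmt_10 (r : ℕ) (hr : 3 ≤ r) (p e : ℕ → ℕ)
    (hp : ∀ i < r, (p i).Prime)
    (hmono : ∀ i j, i < j → j < r → p i < p j)
    (he : ∀ i < r, 1 ≤ e i)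
    (a : ℕ) (ha : a < r) (hea : 2 ≤ e a) :
    (2 * Nat.totient ((∏ i ∈ Finset.range r, p i) / p a) >
        (∏ i ∈ Finset.range r, p i) / p a →
      ∀ s, 1 ≤ s → s < e a → beta r p e a s < beta r p e a (s + 1)) ∧
    (2 * Nat.totient ((∏ i ∈ Finset.range r, p i) / p a) <
        (∏ i ∈ Finset.range r, p i) / p a →
      ∀ s, 1 ≤ s → s < e a → beta r p e a s > beta r p e a (s + 1)) :=
  stmt_10_general r p e hp a ha
end

section
/- Let r ≥ 3, n = p_1^{n_1}⋯p_r^{n_r} with primes p_1 < ... < p_r, and define β_a^s as β_a^s = φ(n) + (n/(p_1⋯p_r))·(1/p_a^{s-1})·[ (p_1⋯p_r)/p_a + φ((p_1⋯p_r)/p_a)·(p_a^{s-1} − 2) ]. If a < b in [r] and p_a^s < p_b for some s ∈ [n_a], then β_a^s > β_b^1. -/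
/-!
Write `P = p₁⋯p_r = p_a p_b M` and `q = p_a^{s-1}`. After cancelling `φ(n)` and the positive factor
`n / P`, the inequality `β_b^1 < β_a^s` becomes
`q (p_a M − (p_a − 1) φ(M)) < p_b M + (p_b − 1) φ(M) (q − 2)`,
whose right side minus left side is `(p_b − p_a q)(M − φ(M)) + φ(M)(q − 1)(p_b − 2)`.
This is positive because `p_a q = p_a^s < p_b`, and `φ(M) < M` as `M > 1` when `r ≥ 3`.
-/

open Finset

theorem Finset.prod_eq_mul_mul_prod_erase_erase {ι M : Type*} [DecidableEq ι] [CommMonoid M]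
    {s : Finset ι} {a b : ι} (f : ι → M) (ha : a ∈ s) (hb : b ∈ s) (hab : a ≠ b) :
    ∏ i ∈ s, f i = f a * (f b * ∏ i ∈ (s.erase a).erase b, f i) := by
  rw [← mul_prod_erase s f ha, ← mul_prod_erase _ f (mem_erase.2 ⟨hab.symm, hb⟩)]

theorem Finset.one_lt_prod_erase_erase {ι : Type*} [DecidableEq ι] {s : Finset ι} {f : ι → ℕ}
    (hf : ∀ i ∈ s, 1 < f i) (hs : 3 ≤ s.card) (a b : ι) :
    1 < ∏ i ∈ (s.erase a).erase b, f i := by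
  obtain ⟨c, hc⟩ : ((s.erase a).erase b).Nonempty := by
    have := pred_card_le_card_erase (s := s) (a := a)
    have := pred_card_le_card_erase (s := s.erase a) (a := b)
    rw [← card_pos]
    omega
  have hf' : ∀ i ∈ (s.erase a).erase b, 1 < f i := fun i hi =>
    hf i (mem_of_mem_erase (mem_of_mem_erase hi))
  exact (hf' c hc).trans_le (single_le_prod' (fun i hi => (hf' i hi).le) hc)

theorem Nat.totient_prime_mul_prod_primes {ι : Type*} {s : Finset ι} {p : ι → ℕ} {c : ι}
    (hc : (p c).Prime) (hs : ∀ i ∈ s, (p i).Prime) (hne : ∀ i ∈ s, p c ≠ p i) :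
    (p c * ∏ i ∈ s, p i).totient = (p c - 1) * (∏ i ∈ s, p i).totient := by
  rw [Nat.totient_mul (Nat.Coprime.prod_right fun i hi => (Nat.coprime_primes hc (hs i hi)).2
    (hne i hi)), Nat.totient_prime hc]

theorem beta_eq_of_prod_eq (r : ℕ) (p e : ℕ → ℕ) {a s m : ℕ}
    (hP : ∏ i ∈ range r, p i = p a * m) (ha : 0 < p a) :
    beta r p e a s = (Nat.totient (∏ i ∈ range r, p i ^ e i) : ℚ) +
      ((∏ i ∈ range r, p i ^ e i : ℕ) : ℚ) / ((∏ i ∈ range r, p i : ℕ) : ℚ) *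
        ((m + (Nat.totient m : ℚ) * ((p a : ℚ) ^ (s - 1) - 2)) / (p a : ℚ) ^ (s - 1)) := by
  have hdiv : (∏ i ∈ range r, p i) / p a = m := by rw [hP, Nat.mul_div_cancel_left _ ha]
  have hcast : ((∏ i ∈ range r, p i : ℕ) : ℚ) / p a = m := by
    rw [hP, Nat.cast_mul, mul_div_cancel_left₀ _ (by positivity)]
  rw [beta, hdiv, hcast]
  ring

theorem beta_bracket_lt {pa pb m f q : ℚ} (hf : 0 ≤ f) (hfm : f < m) (hq : 1 ≤ q) (hpb : 2 ≤ pb)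
    (hlt : pa * q < pb) :
    pa * m + (pa - 1) * f * (1 - 2) < (pb * m + (pb - 1) * f * (q - 2)) / q := by
  rw [lt_div_iff₀ (by linarith)]
  have hpos : 0 < (pb - pa * q) * (m - f) := mul_pos (by linarith) (by linarith)
  have hnonneg : 0 ≤ f * (q - 1) * (pb - 2) :=
    mul_nonneg (mul_nonneg hf (by linarith)) (by linarith)
  linear_combination hpos + hnonneg

theorem stmt_11_general (r : ℕ) (hr : 3 ≤ r) (p e : ℕ → ℕ)
    (hp : ∀ i < r, (p i).Prime)
    (hmono : ∀ i j, i < j → j < r → p i < p j)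
    (a b : ℕ) (hab : a < b) (hb : b < r)
    (s : ℕ) (hs1 : 1 ≤ s) (hps : p a ^ s < p b) :
    beta r p e a s > beta r p e b 1 := by
  have ha : a < r := hab.trans hb
  have hinj : Set.InjOn p (Set.Iio r) := StrictMonoOn.injOn fun i _ j hj hij => hmono i j hij hj
  set T := ((range r).erase a).erase b
  have hT : ∀ i ∈ T, i ≠ a ∧ i ≠ b ∧ i < r := fun i hi => by
    simp only [T, mem_erase, mem_range] at hi
    exact ⟨hi.2.1, hi.1, hi.2.2⟩
  have hTprime : ∀ i ∈ T, (p i).Prime := fun i hi => hp i (hT i hi).2.2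
  have hPa := prod_eq_mul_mul_prod_erase_erase p (mem_range.2 ha) (mem_range.2 hb) hab.ne
  have hPb : ∏ i ∈ range r, p i = p b * (p a * ∏ i ∈ T, p i) := by rw [hPa, mul_left_comm]
  have hφa := Nat.totient_prime_mul_prod_primes (hp a ha) hTprime
    fun i hi => hinj.ne ha (hT i hi).2.2 (hT i hi).1.symm
  have hφb := Nat.totient_prime_mul_prod_primes (hp b hb) hTprime
    fun i hi => hinj.ne hb (hT i hi).2.2 (hT i hi).2.1.symm
  have hM : 1 < ∏ i ∈ T, p i :=
    one_lt_prod_erase_erase (fun i hi => (hp i (mem_range.1 hi)).one_lt) (by simpa) a b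
  have hpaq : p a * p a ^ (s - 1) < p b := by rwa [← pow_succ', Nat.sub_add_cancel hs1]
  rw [gt_iff_lt, beta_eq_of_prod_eq r p e hPb (hp b hb).pos,
    beta_eq_of_prod_eq r p e hPa (hp a ha).pos, hφa, hφb]
  refine add_lt_add_right (mul_lt_mul_of_pos_left ?_ ?_) _
  · push_cast [Nat.sub_self, pow_zero, div_one, Nat.cast_sub (hp a ha).one_le,
      Nat.cast_sub (hp b hb).one_le]
    refine beta_bracket_lt (Nat.cast_nonneg _) (by exact_mod_cast Nat.totient_lt _ hM)
      (one_le_pow₀ (by exact_mod_cast (hp a ha).one_le)) (by exact_mod_cast (hp b hb).two_le)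
      (by exact_mod_cast hpaq)
  · have hpos := fun i (hi : i ∈ range r) => (hp i (mem_range.1 hi)).pos
    exact div_pos (by exact_mod_cast prod_pos fun i hi => pow_pos (hpos i hi) _)
      (by exact_mod_cast prod_pos hpos)

theorem stmt_11 (r : ℕ) (hr : 3 ≤ r) (p e : ℕ → ℕ)
    (hp : ∀ i < r, (p i).Prime)
    (hmono : ∀ i j, i < j → j < r → p i < p j)
    (he : ∀ i < r, 1 ≤ e i)
    (a b : ℕ) (hab : a < b) (hb : b < r)
    (s : ℕ) (hs1 : 1 ≤ s) (hs : s ≤ e a) (hps : p a ^ s < p b) :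
    beta r p e a s > beta r p e b 1 :=
  stmt_11_general r hr p e hp hmono a b hab hb s hs1 hps
end

section
/- Let r ≥ 3, n = p_1^{n_1}⋯p_r^{n_r} with primes p_1 < ... < p_r, and β_a^s defined by β_a^s = φ(n) + (n/(p_1⋯p_r))·(1/p_a^{s-1})·[ (p_1⋯p_r)/p_a + φ((p_1⋯p_r)/p_a)·(p_a^{s-1} − 2) ]. Then β_1^1 > β_2^1 > ... > β_r^1. -/
/-!
For `s = 1` the bracket in `β_a^1` is `c - φ(c)` with `c = (p_1⋯p_r)/p_a`. Writing `c = p_b m`,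
where `m` is the product of the primes other than `p_a` and `p_b`, multiplicativity of `φ` gives
`c - φ(c) = p_b (m - φ(m)) + φ(m)`. Since `r ≥ 3` we have `m > 1`, so `m - φ(m) > 0` and this
grows strictly with `p_b`. Swapping `a` and `b` then gives `β_a^1 > β_b^1` whenever `p_a < p_b`.
-/

open Finset

lemma Nat.cast_mul_sub_totient_mul {q m : ℕ} (hq : q.Prime) (hqm : ¬q ∣ m) :
    ((q * m : ℕ) : ℚ) - (q * m).totient = q * ((m : ℚ) - m.totient) + m.totient := by
  rw [Nat.totient_mul ((Nat.Prime.coprime_iff_not_dvd hq).2 hqm), Nat.totient_prime hq]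
  push_cast [hq.one_le]
  ring

lemma Nat.mul_sub_totient_mul_lt {q q' m : ℕ} (hq : q.Prime) (hq' : q'.Prime) (hqq' : q < q')
    (hm : 1 < m) (hqm : ¬q ∣ m) (hq'm : ¬q' ∣ m) :
    ((q * m : ℕ) : ℚ) - (q * m).totient < ((q' * m : ℕ) : ℚ) - (q' * m).totient := by
  rw [Nat.cast_mul_sub_totient_mul hq hqm, Nat.cast_mul_sub_totient_mul hq' hq'm]
  have hφ : ((m.totient : ℕ) : ℚ) < m := by exact_mod_cast Nat.totient_lt m hm
  gcongr

lemma beta_one_eq_of_prod_eq {r : ℕ} {p e : ℕ → ℕ} {a c : ℕ} (ha : p a ≠ 0)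
    (hc : ∏ i ∈ range r, p i = p a * c) :
    beta r p e a 1 = (∏ i ∈ range r, p i ^ e i).totient +
      ((∏ i ∈ range r, p i ^ e i : ℕ) : ℚ) / ((∏ i ∈ range r, p i : ℕ) : ℚ) *
        ((c : ℚ) - c.totient) := by
  have hcast : ((∏ i ∈ range r, p i : ℕ) : ℚ) / p a = c := by
    rw [hc, Nat.cast_mul, mul_div_cancel_left₀ _ (by exact_mod_cast ha)]
  rw [beta, hcast, hc, Nat.mul_div_cancel_left _ (Nat.pos_of_ne_zero ha)]
  ring

lemma beta_one_lt_of_prod_eq {r : ℕ} {p e : ℕ → ℕ} {a b m : ℕ} (ha : (p a).Prime)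
    (hb : (p b).Prime) (hab : p a < p b) (hm : 1 < m) (ham : ¬p a ∣ m) (hbm : ¬p b ∣ m)
    (hP : ∏ i ∈ range r, p i = p a * (p b * m)) :
    beta r p e b 1 < beta r p e a 1 := by
  rw [beta_one_eq_of_prod_eq hb.ne_zero (c := p a * m) (by rw [hP, mul_left_comm]),
    beta_one_eq_of_prod_eq ha.ne_zero hP]
  have hP_pos : 0 < ∏ i ∈ range r, p i := by
    rw [hP]; exact Nat.mul_pos ha.pos (Nat.mul_pos hb.pos (by omega))
  have hpos : ∀ i ∈ range r, 0 < p i := fun i hi =>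
    Nat.pos_of_ne_zero ((prod_ne_zero_iff.1 hP_pos.ne') i hi)
  have hratio_pos :
      (0 : ℚ) < ((∏ i ∈ range r, p i ^ e i : ℕ) : ℚ) / ((∏ i ∈ range r, p i : ℕ) : ℚ) :=
    div_pos (by exact_mod_cast prod_pos fun i hi => pow_pos (hpos i hi) _)
      (by exact_mod_cast hP_pos)
  gcongr _ + _ * ?_
  exact Nat.mul_sub_totient_mul_lt ha hb hab hm ham hbm

lemma Nat.Prime.not_dvd_prod_primes {ι : Type*} {q : ℕ} {s : Finset ι} {f : ι → ℕ}
    (hq : q.Prime) (hf : ∀ i ∈ s, (f i).Prime) (hne : ∀ i ∈ s, q ≠ f i) :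
    ¬q ∣ ∏ i ∈ s, f i := by
  rw [Prime.dvd_finsetProd_iff hq.prime]
  rintro ⟨i, hi, hdvd⟩
  exact hne i hi ((Nat.prime_dvd_prime_iff_eq hq (hf i hi)).1 hdvd)

lemma Nat.one_lt_prod_primes {ι : Type*} {s : Finset ι} {f : ι → ℕ}
    (hf : ∀ i ∈ s, (f i).Prime) (hs : s.Nonempty) : 1 < ∏ i ∈ s, f i := by
  obtain ⟨i, hi⟩ := hs
  exact (hf i hi).one_lt.trans_le <|
    Nat.le_of_dvd (prod_pos fun j hj => (hf j hj).pos) (dvd_prod_of_mem f hi)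

theorem stmt_12_general (r : ℕ) (hr : 3 ≤ r) (p e : ℕ → ℕ)
    (hp : ∀ i < r, (p i).Prime)
    (hmono : ∀ i j, i < j → j < r → p i < p j)
    (a b : ℕ) (hab : a < b) (hb : b < r) :
    beta r p e a 1 > beta r p e b 1 := by
  have ha : a < r := hab.trans hb
  have hinj : Set.InjOn p (Set.Iio r) :=
    StrictMonoOn.injOn fun i hi j hj hij => hmono i j hij hj
  set s := ((range r).erase a).erase b
  have hs : ∀ i ∈ s, i ≠ a ∧ i ≠ b ∧ i < r := fun i hi => by
    simp only [s, mem_erase, mem_range] at hi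
    exact ⟨hi.2.1, hi.1, hi.2.2⟩
  have hps : ∀ i ∈ s, (p i).Prime := fun i hi => hp i (hs i hi).2.2
  have hs_nonempty : s.Nonempty := by
    rw [← card_pos, card_erase_of_mem (by simp [hab.ne', hb]),
      card_erase_of_mem (by simp [ha]), card_range]
    omega
  have hnot_dvd : ∀ k < r, k = a ∨ k = b → ¬p k ∣ ∏ i ∈ s, p i := fun k hk hkab =>
    (hp k hk).not_dvd_prod_primes hps fun i hi heq => by
      have := hinj hk (hs i hi).2.2 heq
      obtain ⟨hia, hib, -⟩ := hs i hi
      omega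
  have hP : ∏ i ∈ range r, p i = p a * (p b * ∏ i ∈ s, p i) := by
    rw [mul_prod_erase _ _ (by simp [hab.ne', hb]), mul_prod_erase _ _ (by simp [ha])]
  exact beta_one_lt_of_prod_eq (hp a ha) (hp b hb) (hmono a b hab hb)
    (Nat.one_lt_prod_primes hps hs_nonempty) (hnot_dvd a ha (.inl rfl))
    (hnot_dvd b hb (.inr rfl)) hP

theorem stmt_12 (r : ℕ) (hr : 3 ≤ r) (p e : ℕ → ℕ)
    (hp : ∀ i < r, (p i).Prime)
    (hmono : ∀ i j, i < j → j < r → p i < p j)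
    (he : ∀ i < r, 1 ≤ e i)
    (a b : ℕ) (hab : a < b) (hb : b < r) :
    beta r p e a 1 > beta r p e b 1 :=
  stmt_12_general r hr p e hp hmono a b hab hb
end

section
/- Let r ≥ 3, n = p_1^{n_1}⋯p_r^{n_r} with primes p_1 < ... < p_r, a < b in [r], s ∈ [n_a], t ∈ [n_b], and β defined by β_a^s = φ(n) + (n/(p_1⋯p_r))·(1/p_a^{s-1})·[ (p_1⋯p_r)/p_a + φ((p_1⋯p_r)/p_a)·(p_a^{s-1} − 2) ]. If p_a^{s-1} ≤ p_b^{t-1} and 2·φ((p_1⋯p_r)/p_a) < (p_1⋯p_r)/p_a, then β_a^s > β_b^t. -/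
/-!
Write `β_a^s = φ(n) + (n / P) · T(Q_a, f_a, p_a^{s-1})` with `P = p_1⋯p_r`, `Q_a = P / p_a`,
`f_a = φ(Q_a)` and `T(Q, f, x) = (Q + f (x - 2)) / x = f + (Q - 2f) / x`. When `2 f_a < Q_a` the
map `x ↦ T(Q_a, f_a, x)` is decreasing, so `p_a^{s-1} ≤ p_b^{t-1}` lets us compare both sides at
`y = p_b^{t-1}`. With `M` the product of the remaining `r - 2 ≥ 1` primes, `Q_a = p_b M`,
`f_a = (p_b - 1) φ(M)` and symmetrically for `b`, so that
`T(Q_a, f_a, y) - T(Q_b, f_b, y) = (p_b - p_a) (M + φ(M) (y - 2)) / y > 0` since `φ(M) < M`.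
-/

open Finset

def betaTerm (Q f x : ℚ) : ℚ := 1 / x * (Q + f * (x - 2))

lemma betaTerm_eq (Q f : ℚ) {x : ℚ} (hx : x ≠ 0) : betaTerm Q f x = f + (Q - 2 * f) / x := by
  unfold betaTerm
  field_simp
  ring

lemma betaTerm_le_of_le {Q f x y : ℚ} (hQf : 2 * f < Q) (hx : 0 < x) (hxy : x ≤ y) :
    betaTerm Q f y ≤ betaTerm Q f x := by
  rw [betaTerm_eq Q f hx.ne', betaTerm_eq Q f (hx.trans_le hxy).ne']
  gcongr

lemma betaTerm_lt_of_lt {p q M φ y : ℚ} (hpq : p < q) (hφ : 0 ≤ φ) (hφM : φ < M) (hy : 1 ≤ y) :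
    betaTerm (p * M) ((p - 1) * φ) y < betaTerm (q * M) ((q - 1) * φ) y := by
  unfold betaTerm
  have hpos : 0 < M + φ * (y - 2) := by nlinarith
  gcongr 1 / y * ?_
  nlinarith

lemma beta_eq (r : ℕ) (p e : ℕ → ℕ) {a : ℕ} (s : ℕ) (ha : a < r) (hpa : p a ≠ 0) :
    beta r p e a s = Nat.totient (∏ i ∈ range r, p i ^ e i) +
      ((∏ i ∈ range r, p i ^ e i : ℕ) : ℚ) / ((∏ i ∈ range r, p i : ℕ) : ℚ) *
        betaTerm ((∏ i ∈ range r, p i) / p a : ℕ) (Nat.totient ((∏ i ∈ range r, p i) / p a))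
          ((p a : ℚ) ^ (s - 1)) := by
  rw [Nat.cast_div (dvd_prod_of_mem p (mem_range.2 ha)) (Nat.cast_ne_zero.2 hpa)]
  simp only [beta, betaTerm, mul_assoc]

lemma betaTerm_natCast_lt {p q M φ x y : ℕ} (hp : 0 < p) (hpq : p < q) (hφM : φ < M)
    (hQf : 2 * ((q - 1) * φ) < q * M) (hpow : p ^ x ≤ q ^ y) :
    betaTerm (p * M : ℕ) ((p - 1) * φ : ℕ) (q ^ y) <
      betaTerm (q * M : ℕ) ((q - 1) * φ : ℕ) (p ^ x) := by
  have hQf' := (Nat.cast_lt (α := ℚ)).2 hQf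
  push_cast [Nat.cast_sub hp, Nat.cast_sub (hp.trans hpq)] at hQf' ⊢
  have hpq' : (p : ℚ) < q := by exact_mod_cast hpq
  have hp' : (1 : ℚ) ≤ p := by exact_mod_cast hp
  calc betaTerm (p * M) ((p - 1) * φ) (q ^ y)
      < betaTerm (q * M) ((q - 1) * φ) (q ^ y) :=
        betaTerm_lt_of_lt hpq' (by positivity) (by exact_mod_cast hφM)
          (one_le_pow₀ (hp'.trans hpq'.le))
    _ ≤ betaTerm (q * M) ((q - 1) * φ) (p ^ x) :=
        betaTerm_le_of_le hQf' (by positivity) (by exact_mod_cast hpow)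

lemma totient_prime_mul_prod {ι : Type*} {p : ι → ℕ} {S : Finset ι} {q : ℕ} (hq : q.Prime)
    (hS : ∀ i ∈ S, (p i).Prime ∧ p i ≠ q) :
    Nat.totient (q * ∏ i ∈ S, p i) = (q - 1) * Nat.totient (∏ i ∈ S, p i) := by
  rw [Nat.totient_mul (Nat.Coprime.prod_right fun i hi =>
      (Nat.coprime_primes hq (hS i hi).1).2 (hS i hi).2.symm), Nat.totient_prime hq]

section DistinctPrimes

variable {ι : Type*} [DecidableEq ι] {p : ι → ℕ} {S : Finset ι} {a b : ι}

lemma prod_div_eq_mul_prod_erase_erase (ha : a ∈ S) (hb : b ∈ S) (hab : a ≠ b) (hpa : 0 < p a) :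
    (∏ i ∈ S, p i) / p a = p b * ∏ i ∈ (S.erase a).erase b, p i := by
  rw [← mul_prod_erase S p ha, ← mul_prod_erase _ p (mem_erase.2 ⟨hab.symm, hb⟩),
    Nat.mul_div_cancel_left _ hpa]

lemma totient_prod_div_eq (hp : ∀ i ∈ S, (p i).Prime) (hinj : Set.InjOn p S) (ha : a ∈ S)
    (hb : b ∈ S) (hab : a ≠ b) :
    Nat.totient ((∏ i ∈ S, p i) / p a) =
      (p b - 1) * Nat.totient (∏ i ∈ (S.erase a).erase b, p i) := by
  rw [prod_div_eq_mul_prod_erase_erase ha hb hab (hp a ha).pos]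
  refine totient_prime_mul_prod (hp b hb) fun i hi => ?_
  have hiS := mem_of_mem_erase (mem_of_mem_erase hi)
  exact ⟨hp i hiS, fun h => ne_of_mem_erase hi (hinj hiS hb h)⟩

lemma one_lt_prod_erase_erase (hp : ∀ i ∈ S, (p i).Prime) (ha : a ∈ S) (hb : b ∈ S) (hab : a ≠ b)
    (hS : 2 < S.card) : 1 < ∏ i ∈ (S.erase a).erase b, p i := by
  obtain ⟨c, hc⟩ : ((S.erase a).erase b).Nonempty := card_pos.1 (by
    rw [card_erase_of_mem (mem_erase.2 ⟨hab.symm, hb⟩), card_erase_of_mem ha]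
    omega)
  have hp' : ∀ i ∈ (S.erase a).erase b, (p i).Prime := fun i hi =>
    hp i (mem_of_mem_erase (mem_of_mem_erase hi))
  exact (hp' c hc).one_lt.trans_le (single_le_prod' (fun i hi => (hp' i hi).one_le) hc)

end DistinctPrimes

theorem stmt_14_general (r : ℕ) (hr : 3 ≤ r) (p e : ℕ → ℕ)
    (hp : ∀ i < r, (p i).Prime)
    (hmono : ∀ i j, i < j → j < r → p i < p j)
    (a b : ℕ) (hab : a < b) (hb : b < r)
    (s t : ℕ)
    (hpow : p a ^ (s - 1) ≤ p b ^ (t - 1))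
    (hphi : 2 * Nat.totient ((∏ i ∈ Finset.range r, p i) / p a) <
      (∏ i ∈ Finset.range r, p i) / p a) :
    beta r p e a s > beta r p e b t := by
  have ha : a < r := hab.trans hb
  have hprime : ∀ i ∈ range r, (p i).Prime := fun i hi => hp i (mem_range.1 hi)
  have hinj : Set.InjOn p (range r) := StrictMonoOn.injOn fun i _ j hj hij =>
    hmono i j hij (mem_range.1 hj)
  have hma := mem_range.2 ha
  have hmb := mem_range.2 hb
  rw [totient_prod_div_eq hprime hinj hma hmb hab.ne,
    prod_div_eq_mul_prod_erase_erase hma hmb hab.ne (hprime a hma).pos] at hphi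
  rw [gt_iff_lt, beta_eq r p e s ha (hprime a hma).ne_zero,
    beta_eq r p e t hb (hprime b hmb).ne_zero, totient_prod_div_eq hprime hinj hma hmb hab.ne,
    totient_prod_div_eq hprime hinj hmb hma hab.ne',
    prod_div_eq_mul_prod_erase_erase hma hmb hab.ne (hprime a hma).pos,
    prod_div_eq_mul_prod_erase_erase hmb hma hab.ne' (hprime b hmb).pos, erase_right_comm (a := b)]
  have hK : (0 : ℚ) < ((∏ i ∈ range r, p i ^ e i : ℕ) : ℚ) / ((∏ i ∈ range r, p i : ℕ) : ℚ) :=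
    div_pos (Nat.cast_pos.2 (prod_pos fun i hi => pow_pos (hprime i hi).pos _))
      (Nat.cast_pos.2 (prod_pos fun i hi => (hprime i hi).pos))
  gcongr ?_ + _ * ?_
  have hM := one_lt_prod_erase_erase hprime hma hmb hab.ne (by rw [card_range]; omega)
  exact_mod_cast betaTerm_natCast_lt (hprime a hma).pos (hmono a b hab hb)
    (Nat.totient_lt _ hM) hphi hpow

theorem stmt_14 (r : ℕ) (hr : 3 ≤ r) (p e : ℕ → ℕ)
    (hp : ∀ i < r, (p i).Prime)
    (hmono : ∀ i j, i < j → j < r → p i < p j)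
    (he : ∀ i < r, 1 ≤ e i)
    (a b : ℕ) (hab : a < b) (hb : b < r)
    (s t : ℕ) (hs1 : 1 ≤ s) (hs : s ≤ e a) (ht1 : 1 ≤ t) (ht : t ≤ e b)
    (hpow : p a ^ (s - 1) ≤ p b ^ (t - 1))
    (hphi : 2 * Nat.totient ((∏ i ∈ Finset.range r, p i) / p a) <
      (∏ i ∈ Finset.range r, p i) / p a) :
    beta r p e a s > beta r p e b t :=
  stmt_14_general r hr p e hp hmono a b hab hb s t hpow hphi
end

section
/- Let p_1 < p_2 < p_3 < p_4 < p_5 be primes with p_1 = 3. Then for each i ∈ {1,2,3}, φ((p_1p_2p_3p_4p_5)/p_i) + φ(p_1p_2p_3p_4) > p_1p_2p_3p_4. -/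
lemma tot4' {p q r s : ℕ} (hp : p.Prime) (hq : q.Prime) (hr : r.Prime) (hs : s.Prime)
    (hpq : p ≠ q) (hpr : p ≠ r) (hps : p ≠ s) (hqr : q ≠ r) (hqs : q ≠ s) (hrs : r ≠ s) :
    (p * q * r * s).totient = (p - 1) * (q - 1) * (r - 1) * (s - 1) := by
  have cpq : Nat.Coprime p q := (Nat.coprime_primes hp hq).mpr hpq
  have cpr : Nat.Coprime p r := (Nat.coprime_primes hp hr).mpr hpr
  have cps : Nat.Coprime p s := (Nat.coprime_primes hp hs).mpr hps
  have cqr : Nat.Coprime q r := (Nat.coprime_primes hq hr).mpr hqr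
  have cqs : Nat.Coprime q s := (Nat.coprime_primes hq hs).mpr hqs
  have crs : Nat.Coprime r s := (Nat.coprime_primes hr hs).mpr hrs
  rw [Nat.totient_mul ((cps.mul cqs).mul crs), Nat.totient_mul (cpr.mul cqr),
    Nat.totient_mul cpq, Nat.totient_prime hp, Nat.totient_prime hq, Nat.totient_prime hr,
    Nat.totient_prime hs]

lemma ineq3' (a b c d : ℕ) (ha : 4 ≤ a) (hb : a + 2 ≤ b) (hc : b + 2 ≤ c) (hd : c + 2 ≤ d) :
    2*(a*c*d) + 2*(a*b*c) > 3*((a+1)*(b+1)*(c+1)) := by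
  have h1 : 2*(a*c*d) + 2*(a*b*c) ≥ 2*a*(c*(b+c+2)) := by
    have : c*(c+2) ≤ c*d := Nat.mul_le_mul_left _ hd
    nlinarith
  have h2 : 5*(2*a) ≥ 8*(a+1) := by omega
  have h3 : 8*(c*(b+c+2)) > 15*((b+1)*(c+1)) := by nlinarith
  have h4 : 15*((b+1)*(c+1)) + 1 ≤ 8*(c*(b+c+2)) := h3
  nlinarith [Nat.mul_le_mul h2 h4]

theorem stmt_18 (p₁ p₂ p₃ p₄ p₅ : ℕ)
    (hp₁ : p₁.Prime) (hp₂ : p₂.Prime) (hp₃ : p₃.Prime) (hp₄ : p₄.Prime)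
    (hp₅ : p₅.Prime)
    (h12 : p₁ < p₂) (h23 : p₂ < p₃) (h34 : p₃ < p₄) (h45 : p₄ < p₅)
    (hp1 : p₁ = 3) :
    Nat.totient (p₂ * p₃ * p₄ * p₅) + Nat.totient (p₁ * p₂ * p₃ * p₄) >
      p₁ * p₂ * p₃ * p₄ ∧
    Nat.totient (p₁ * p₃ * p₄ * p₅) + Nat.totient (p₁ * p₂ * p₃ * p₄) >
      p₁ * p₂ * p₃ * p₄ ∧
    Nat.totient (p₁ * p₂ * p₄ * p₅) + Nat.totient (p₁ * p₂ * p₃ * p₄) >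
      p₁ * p₂ * p₃ * p₄ := by
  subst hp1
  have o2 : p₂ % 2 = 1 := Nat.odd_iff.mp (hp₂.odd_of_ne_two (by omega))
  have o3 : p₃ % 2 = 1 := Nat.odd_iff.mp (hp₃.odd_of_ne_two (by omega))
  have o4 : p₄ % 2 = 1 := Nat.odd_iff.mp (hp₄.odd_of_ne_two (by omega))
  have o5 : p₅ % 2 = 1 := Nat.odd_iff.mp (hp₅.odd_of_ne_two (by omega))
  obtain ⟨a, rfl⟩ : ∃ a, p₂ = a + 1 := ⟨p₂ - 1, by omega⟩
  obtain ⟨b, rfl⟩ : ∃ b, p₃ = b + 1 := ⟨p₃ - 1, by omega⟩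
  obtain ⟨c, rfl⟩ : ∃ c, p₄ = c + 1 := ⟨p₄ - 1, by omega⟩
  obtain ⟨d, rfl⟩ : ∃ d, p₅ = d + 1 := ⟨p₅ - 1, by omega⟩
  have ha : 4 ≤ a := by omega
  have hb : a + 2 ≤ b := by omega
  have hc : b + 2 ≤ c := by omega
  have hd : c + 2 ≤ d := by omega
  have p3 : Nat.Prime 3 := by norm_num
  have t0 : Nat.totient (3 * (a+1) * (b+1) * (c+1)) = 2 * a * b * c := by
    rw [tot4' p3 hp₂ hp₃ hp₄ (by omega) (by omega) (by omega) (by omega) (by omega) (by omega)]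
    simp
  have t1 : Nat.totient ((a+1) * (b+1) * (c+1) * (d+1)) = a * b * c * d := by
    rw [tot4' hp₂ hp₃ hp₄ hp₅ (by omega) (by omega) (by omega) (by omega) (by omega) (by omega)]
    simp
  have t2 : Nat.totient (3 * (b+1) * (c+1) * (d+1)) = 2 * b * c * d := by
    rw [tot4' p3 hp₃ hp₄ hp₅ (by omega) (by omega) (by omega) (by omega) (by omega) (by omega)]
    simp
  have t3 : Nat.totient (3 * (a+1) * (c+1) * (d+1)) = 2 * a * c * d := by
    rw [tot4' p3 hp₂ hp₄ hp₅ (by omega) (by omega) (by omega) (by omega) (by omega) (by omega)]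
    simp
  have key := ineq3' a b c d ha hb hc hd
  have e1 : 2*(a*c*d) ≤ a*b*c*d := by
    calc 2*(a*c*d) ≤ b*(a*c*d) := Nat.mul_le_mul_right _ (by omega)
    _ = a*b*c*d := by ring
  have e2 : 2*(a*c*d) ≤ 2*(b*c*d) := by
    have h : a*(c*d) ≤ b*(c*d) := Nat.mul_le_mul_right _ (by omega)
    calc 2*(a*c*d) = 2*(a*(c*d)) := by ring
    _ ≤ 2*(b*(c*d)) := by omega
    _ = 2*(b*c*d) := by ring
  refine ⟨?_, ?_, ?_⟩
  · rw [t1, t0]; linarith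
  · rw [t2, t0]; linarith
  · rw [t3, t0]; linarith
end
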